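/- arXiv:2511.10454 — 2 statements merged into one kernel-verified Lean document; each statement's English description precedes it below -/
import Mathlib

section
/- In Mod K for K an essentially small rigid tensor-triangulated category, a definable subcategory D of Flat K is ⊗-closed if and only if y(k) ⊗ X ∈ D for every k ∈ K and X ∈ D. -/
open CategoryTheory CategoryTheory.Limits CategoryTheory.MonoidalCategory
open CategoryTheory.Pretriangulated Opposite

universe u

namespace TTG

variable (K : Type u) [SmallCategory K] [Preadditive K]

/-- The module category `Mod K` of additive functors `Kᵒᵖ → Ab`. -/
abbrev Mod := Kᵒᵖ ⥤ AddCommGrpCat.{u}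

/-- The (preadditive) Yoneda embedding. -/
abbrev yK : K ⥤ Mod K := preadditiveYoneda

/-- Finitely presented objects of `Mod K`: cokernels of maps of representables. -/
def IsFP (f : Mod K) : Prop :=
  ∃ (k k' : K) (g : (yK K).obj k ⟶ (yK K).obj k'), Nonempty (f ≅ cokernel g)

/-- Flat (= cohomological) objects of `Mod K`: filtered colimits of representables. -/
def IsFlat (X : Mod K) : Prop :=
  ∃ (J : Type u) (_ : SmallCategory J) (_ : IsFiltered J) (D : J ⥤ K),
    Nonempty (colimit (D ⋙ yK K) ≅ X)

/-- Pure monomorphisms in `Mod K`. -/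
def IsPureMono {A B : Mod K} (i : A ⟶ B) : Prop :=
  Mono i ∧ ∀ f : Mod K, IsFP K f → ∀ g : f ⟶ cokernel i,
    ∃ h : f ⟶ B, h ≫ cokernel.π i = g

/-- Definable subcategories of `Flat K`: classes of flat objects closed under
pure subobjects, products and direct limits. -/
structure IsDefinable (D : Set (Mod K)) : Prop where
  flat : ∀ X ∈ D, IsFlat K X
  pure_sub : ∀ {A B : Mod K} (i : A ⟶ B), IsPureMono K i → B ∈ D → A ∈ D
  prod_mem : ∀ (ι : Type u) (X : ι → Mod K), (∀ i, X i ∈ D) → (∏ᶜ X) ∈ D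
  colim_mem : ∀ (J : Type u) [SmallCategory J] [IsFiltered J] (G : J ⥤ Mod K),
      (∀ j, G.obj j ∈ D) → colimit G ∈ D

/-- The pure subobject closure of a class of objects. -/
def pureClosure (T : Set (Mod K)) : Set (Mod K) :=
  {A | ∃ B ∈ T, ∃ i : A ⟶ B, IsPureMono K i}

section Monoidal

variable [MonoidalCategory (Mod K)]

/-- `⊗`-closed classes of flat objects. -/
def TensorClosed (D : Set (Mod K)) : Prop :=
  ∀ X ∈ D, ∀ Y : Mod K, IsFlat K Y → X ⊗ Y ∈ D

/-- Serre subcategories of `mod K`. -/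
structure IsSerre (S : Set (Mod K)) : Prop where
  fp : ∀ f ∈ S, IsFP K f
  zero_mem : ∀ f : Mod K, IsZero f → f ∈ S
  sub_mem : ∀ {A B : Mod K} (i : A ⟶ B), Mono i → IsFP K A → B ∈ S → A ∈ S
  quot_mem : ∀ {A B : Mod K} (p : A ⟶ B), Epi p → IsFP K B → A ∈ S → B ∈ S
  ext_mem : ∀ (C : ShortComplex (Mod K)), C.ShortExact → IsFP K C.X₂ →
      C.X₁ ∈ S → C.X₃ ∈ S → C.X₂ ∈ S

/-- Serre ⊗-ideals of `mod K`. -/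
def IsSerreTensorIdeal (S : Set (Mod K)) : Prop :=
  IsSerre K S ∧ ∀ f ∈ S, ∀ g : Mod K, IsFP K g → f ⊗ g ∈ S

/-- Homological primes: maximal proper Serre ⊗-ideals of `mod K`. -/
def IsHomPrime (B : Set (Mod K)) : Prop :=
  IsSerreTensorIdeal K B ∧ ¬ (∀ f, IsFP K f → f ∈ B) ∧
    ∀ S, IsSerreTensorIdeal K S → B ⊆ S → ¬ (∀ f, IsFP K f → f ∈ S) → S = B

/-- The definable subcategory `D(S)` associated to a Serre subcategory `S`. -/
def Dcal (S : Set (Mod K)) : Set (Mod K) :=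
  {X | IsFlat K X ∧ ∀ f ∈ S, ∀ g : f ⟶ X, g = 0}

/-- The Serre subcategory `S(D)` associated to a definable subcategory `D`. -/
def Scal (D : Set (Mod K)) : Set (Mod K) :=
  {f | IsFP K f ∧ ∀ X ∈ D, ∀ g : f ⟶ X, g = 0}

/-- The smallest ⊗-closed definable subcategory `Def^⊗(X)` containing `X`. -/
def DefTensor (X : Mod K) : Set (Mod K) :=
  {Y | ∀ D : Set (Mod K), IsDefinable K D → TensorClosed K D → X ∈ D → Y ∈ D}

/-- Simple (= minimal nonzero) ⊗-closed definable subcategories. -/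
def IsSimple (D : Set (Mod K)) : Prop :=
  IsDefinable K D ∧ TensorClosed K D ∧ (∃ X ∈ D, ¬ IsZero X) ∧
    ∀ E ⊆ D, IsDefinable K E → TensorClosed K E → (∃ X ∈ E, ¬ IsZero X) → E = D

/-- Weak ring objects: `η : 𝟙 ⟶ R` with `R ◁ η` a split monomorphism. -/
def IsWeakRing (R : Mod K) : Prop :=
  ∃ η : 𝟙_ (Mod K) ⟶ R, IsSplitMono ((ρ_ R).inv ≫ R ◁ η)

/-- The direct limit closure of a class of objects. -/
def limClosure (S : Set (Mod K)) : Set (Mod K) :=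
  {X | ∃ (J : Type u) (_ : SmallCategory J) (_ : IsFiltered J) (G : J ⥤ Mod K),
    (∀ j, G.obj j ∈ S) ∧ Nonempty (colimit G ≅ X)}

/-- The set of homological primes (points of the homological spectrum). -/
def HP := {B : Set (Mod K) // IsHomPrime K B}

/-- The topology on the homological spectrum, generated by the opens
complementary to the basic closed sets `supp^h(k)`. -/
def hspecTop : TopologicalSpace (HP K) :=
  TopologicalSpace.generateFrom {U | ∃ k : K, U = {B : HP K | (yK K).obj k ∈ B.1}}

end Monoidal

end TTG

/-! Since `y` is monoidal, every `y k` is rigid in `Mod K`, so `- ⊗ y k` is cocontinuous as well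
as `y k ⊗ -`. Writing a flat `X` as a filtered colimit of representables `y (G j)`, the braiding
of `K` then yields `y k ⊗ X ≅ X ⊗ y k`, although `Mod K` itself need not be braided. Both
implications follow, because for flat `Y` the object `X ⊗ Y` is the direct limit of the
`X ⊗ y (G j) ≅ y (G j) ⊗ X`. -/

namespace CategoryTheory.Functor

open LaxMonoidal OplaxMonoidal Monoidal

variable {C D : Type*} [Category C] [Category D] [MonoidalCategory C] [MonoidalCategory D]
  (F : C ⥤ D) [F.Monoidal]

abbrev mapExactPairing (X Y : C) [ExactPairing X Y] : ExactPairing (F.obj X) (F.obj Y) where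
  coevaluation' := ε F ≫ F.map (η_ X Y) ≫ δ F X Y
  evaluation' := μ F Y X ≫ F.map (ε_ X Y) ≫ η F
  coevaluation_evaluation' := by
    have hα : F.obj Y ◁ δ F X Y ≫ (α_ _ _ _).inv ≫ μ F Y X ▷ F.obj Y
        = μ F Y (X ⊗ Y) ≫ F.map (α_ Y X Y).inv ≫ δ F (Y ⊗ X) Y := by
      rw [map_associator_inv]
      simp only [Category.assoc, μ_δ, μ_δ_assoc, Category.comp_id]
    simp only [MonoidalCategory.whiskerLeft_comp, comp_whiskerRight, Category.assoc]
    slice_lhs 3 5 => rw [hα]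
    slice_lhs 2 3 => rw [μ_natural_right]
    slice_lhs 5 6 => rw [δ_natural_left]
    slice_lhs 3 5 => rw [← F.map_comp, ← F.map_comp, ExactPairing.coevaluation_evaluation]
    simp only [F.map_comp, Category.assoc]
    slice_lhs 1 3 => rw [← LaxMonoidal.right_unitality]
    slice_lhs 2 4 => rw [← OplaxMonoidal.left_unitality]
  evaluation_coevaluation' := by
    have hα : δ F X Y ▷ F.obj X ≫ (α_ _ _ _).hom ≫ F.obj X ◁ μ F Y X
        = μ F (X ⊗ Y) X ≫ F.map (α_ X Y X).hom ≫ δ F X (Y ⊗ X) := by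
      rw [map_associator]
      simp only [Category.assoc, μ_δ, μ_δ_assoc, Category.comp_id]
    simp only [MonoidalCategory.whiskerLeft_comp, comp_whiskerRight, Category.assoc]
    slice_lhs 3 5 => rw [hα]
    slice_lhs 2 3 => rw [μ_natural_left]
    slice_lhs 5 6 => rw [δ_natural_right]
    slice_lhs 3 5 => rw [← F.map_comp, ← F.map_comp, ExactPairing.evaluation_coevaluation]
    simp only [F.map_comp, Category.assoc]
    slice_lhs 1 3 => rw [← LaxMonoidal.left_unitality]
    slice_lhs 2 4 => rw [← OplaxMonoidal.right_unitality]

section Braided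

variable [BraidedCategory C]

def compTensorLeftIsoCompTensorRight (c : C) :
    F ⋙ tensorLeft (F.obj c) ≅ F ⋙ tensorRight (F.obj c) :=
  NatIso.ofComponents (fun d => μIso F c d ≪≫ F.mapIso (β_ c d) ≪≫ (μIso F d c).symm)
    (fun {d d'} f => by
      simp only [Iso.trans_hom, Iso.symm_hom, mapIso_hom, μIso_hom, μIso_inv, comp_map,
        curriedTensor_obj_map, flip_obj_map, curriedTensor_map_app, Category.assoc]
      rw [μ_natural_right_assoc, ← F.map_comp_assoc, BraidedCategory.braiding_naturality_right,
        F.map_comp, Category.assoc, δ_natural_left])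

noncomputable def tensorColimitIsoColimitTensor (c : C) {J : Type*} [Category J] (G : J ⥤ C)
    [HasColimit (G ⋙ F)] [PreservesColimit (G ⋙ F) (tensorLeft (F.obj c))]
    [PreservesColimit (G ⋙ F) (tensorRight (F.obj c))] :
    F.obj c ⊗ colimit (G ⋙ F) ≅ colimit (G ⋙ F) ⊗ F.obj c :=
  preservesColimitIso (tensorLeft (F.obj c)) (G ⋙ F) ≪≫
    HasColimit.isoOfNatIso (F := (G ⋙ F) ⋙ tensorLeft (F.obj c))
      (G := (G ⋙ F) ⋙ tensorRight (F.obj c))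
      (isoWhiskerLeft G (compTensorLeftIsoCompTensorRight F c)) ≪≫
    (preservesColimitIso (tensorRight (F.obj c)) (G ⋙ F)).symm

end Braided

end CategoryTheory.Functor

namespace TTG

section

variable {K : Type u} [SmallCategory K] [Preadditive K]

lemma IsDefinable.mem_of_iso {D : Set (Mod K)} (hD : IsDefinable K D) {A B : Mod K} (e : A ≅ B)
    (hB : B ∈ D) : A ∈ D := by
  refine hD.pure_sub e.hom ⟨inferInstance, fun f _ g => ⟨0, ?_⟩⟩ hB
  have hcoker : IsZero (cokernel e.hom) := (isZero_zero _).of_iso (cokernel.ofEpi _)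
  exact hcoker.eq_of_tgt _ _

lemma isFlat_yK (k : K) : IsFlat K ((yK K).obj k) :=
  ⟨Discrete PUnit, inferInstance, inferInstance, (Functor.const _).obj k,
    ⟨HasColimit.isoOfNatIso (Functor.constComp _ _ _) ≪≫
      colimit.isoColimitCocone ⟨_, isColimitConstCocone _ _⟩⟩⟩

lemma IsDefinable.map_mem_of_isFlat {D : Set (Mod K)} (hD : IsDefinable K D)
    (F : Mod K ⥤ Mod K) [PreservesColimits F] (hF : ∀ k, F.obj ((yK K).obj k) ∈ D)
    {Y : Mod K} (hY : IsFlat K Y) : F.obj Y ∈ D := by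
  obtain ⟨J, _, _, G, ⟨e⟩⟩ := hY
  exact hD.mem_of_iso (F.mapIso e.symm ≪≫ preservesColimitIso F (G ⋙ yK K))
    (hD.colim_mem J ((G ⋙ yK K) ⋙ F) fun j => hF (G.obj j))

lemma IsDefinable.yK_tensor_mem_iff [MonoidalCategory K] [BraidedCategory K]
    [RightRigidCategory K] [MonoidalCategory (Mod K)] [(yK K).Monoidal]
    {D : Set (Mod K)} (hD : IsDefinable K D) (k : K) [PreservesColimits (tensorLeft ((yK K).obj k))]
    {X : Mod K} (hX : IsFlat K X) :
    (yK K).obj k ⊗ X ∈ D ↔ X ⊗ (yK K).obj k ∈ D := by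
  obtain ⟨J, _, _, G, ⟨e⟩⟩ := hX
  let _ := (yK K).mapExactPairing k kᘁ
  have := (tensorRightAdjunction ((yK K).obj k) ((yK K).obj kᘁ)).leftAdjoint_preservesColimits
  have swap : (yK K).obj k ⊗ X ≅ X ⊗ (yK K).obj k :=
    (tensorLeft _).mapIso e.symm ≪≫ (yK K).tensorColimitIsoColimitTensor k G ≪≫
      (tensorRight _).mapIso e
  exact ⟨hD.mem_of_iso swap.symm, hD.mem_of_iso swap⟩

end

variable (K : Type u) [SmallCategory K] [Preadditive K]
  [MonoidalCategory K] [SymmetricCategory K] [RigidCategory K]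
  [HasZeroObject K] [HasShift K ℤ] [∀ n : ℤ, (shiftFunctor K n).Additive] [Pretriangulated K]
  [MonoidalCategory (Mod K)] [MonoidalPreadditive (Mod K)]
  [(yK K).Monoidal] [∀ X : Mod K, PreservesColimits (tensorLeft X)]

/-- For `K` an essentially small rigid tt-category, a definable subcategory `D` of `Flat K`
is ⊗-closed if and only if `y k ⊗ X ∈ D` for every `k ∈ K` and `X ∈ D`. -/
theorem tensorClosed_iff_yoneda_tensor (D : Set (Mod K)) (hD : IsDefinable K D) :
    TensorClosed K D ↔ ∀ (k : K), ∀ X ∈ D, (yK K).obj k ⊗ X ∈ D := by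
  constructor
  · intro hT k X hX
    exact (hD.yK_tensor_mem_iff k (hD.flat X hX)).2 (hT X hX _ (isFlat_yK k))
  · intro h X hX Y hY
    exact hD.map_mem_of_isFlat (tensorLeft X)
      (fun k => (hD.yK_tensor_mem_iff k (hD.flat X hX)).1 (h k X hX)) hY

end TTG
end

section
/- For a rigid essentially small tt-category K and X ∈ Flat K in the ⊗-closed definable subcategory D(S) associated to a Serre ⊗-ideal S ⊆ mod K, and any k ∈ K, the object y(k) ⊗ X again lies in D(S); the proof uses the adjunction isomorphism Hom(f, y(k) ⊗ X) ≅ Hom(f ⊗ D(y k), X) and the ideal property f ⊗ D(y k) ∈ S. -/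
open CategoryTheory CategoryTheory.Limits CategoryTheory.MonoidalCategory
open CategoryTheory.Pretriangulated Opposite

universe u

/-!
By rigidity, `f ↦ y k ⊗ f` has `f ↦ y kᘁ ⊗ f` as a left adjoint, so
`Hom(f, y k ⊗ X) ≃ Hom(y kᘁ ⊗ f, X)`. For `f = coker (y h)` finitely presented, right exactness of
`⊗` and the braiding of `K` give `y kᘁ ⊗ f ≅ coker (y (h ▷ kᘁ)) ≅ f ⊗ y kᘁ`, which lies in `S`
when `f` does; hence the right-hand side vanishes for `X ∈ D(S)`. Flatness of `y k ⊗ X` holds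
because `y k ⊗ -` preserves filtered colimits and `y` is monoidal.
-/

namespace CategoryTheory

open Functor.LaxMonoidal Functor.OplaxMonoidal

variable {C D : Type*} [Category C] [Category D] [MonoidalCategory C] [MonoidalCategory D]

abbrev ExactPairing.map (F : C ⥤ D) [F.Monoidal] (X Y : C) [ExactPairing X Y] :
    ExactPairing (F.obj X) (F.obj Y) where
  coevaluation' := ε F ≫ F.map (η_ X Y) ≫ δ F X Y
  evaluation' := μ F Y X ≫ F.map (ε_ X Y) ≫ η F
  coevaluation_evaluation' := by
    have hA : (α_ (F.obj Y) (F.obj X) (F.obj Y)).inv ≫ μ F Y X ▷ F.obj Y =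
        F.obj Y ◁ μ F X Y ≫ μ F Y (X ⊗ Y) ≫ F.map (α_ Y X Y).inv ≫ δ F (Y ⊗ X) Y := by
      rw [Functor.LaxMonoidal.associativity_inv_assoc, Functor.Monoidal.μ_δ, Category.comp_id]
    simp only [MonoidalCategory.whiskerLeft_comp, comp_whiskerRight, Category.assoc]
    rw [reassoc_of% hA]
    simp only [Functor.Monoidal.whiskerLeft_δ_μ_assoc, Functor.LaxMonoidal.μ_natural_right_assoc,
      Functor.OplaxMonoidal.δ_natural_left_assoc]
    rw [← F.map_comp_assoc, ← F.map_comp_assoc, Category.assoc,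
      ExactPairing.coevaluation_evaluation,
      F.map_comp_assoc, ← Functor.OplaxMonoidal.left_unitality,
      ← Functor.LaxMonoidal.right_unitality_assoc]
  evaluation_coevaluation' := by
    have hB : δ F X Y ▷ F.obj X ≫ (α_ (F.obj X) (F.obj Y) (F.obj X)).hom =
        μ F (X ⊗ Y) X ≫ F.map (α_ X Y X).hom ≫ δ F X (Y ⊗ X) ≫ F.obj X ◁ δ F Y X := by
      rw [← Functor.OplaxMonoidal.associativity, Functor.Monoidal.μ_δ_assoc]
    simp only [MonoidalCategory.whiskerLeft_comp, comp_whiskerRight, Category.assoc]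
    rw [reassoc_of% hB]
    simp only [Functor.Monoidal.whiskerLeft_δ_μ_assoc, Functor.LaxMonoidal.μ_natural_left_assoc,
      Functor.OplaxMonoidal.δ_natural_right_assoc]
    rw [← F.map_comp_assoc, ← F.map_comp_assoc, Category.assoc,
      ExactPairing.evaluation_coevaluation,
      F.map_comp_assoc, ← Functor.OplaxMonoidal.right_unitality,
      ← Functor.LaxMonoidal.left_unitality_assoc]

end CategoryTheory

namespace TTG

noncomputable section

variable {K : Type u} [SmallCategory K] [Preadditive K]

lemma isFP_yoneda_obj (k : K) : IsFP K ((yK K).obj k) :=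
  ⟨k, k, 0, ⟨cokernelZeroIsoTarget.symm⟩⟩

lemma IsFP.exists_cokernel_yoneda_map {f : Mod K} (hf : IsFP K f) :
    ∃ (a b : K) (h : a ⟶ b), Nonempty (f ≅ cokernel ((yK K).map h)) := by
  obtain ⟨a, b, g, ⟨e⟩⟩ := hf
  exact ⟨a, b, (yK K).preimage g, ⟨e ≪≫ cokernelIsoOfEq ((yK K).map_preimage g).symm⟩⟩

lemma IsSerre.mem_of_iso {S : Set (Mod K)} (hS : IsSerre K S) {f g : Mod K} (e : f ≅ g)
    (hg : IsFP K g) (hf : f ∈ S) : g ∈ S :=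
  hS.quot_mem e.hom inferInstance hg hf

lemma subsingleton_hom_of_mem_Dcal {S : Set (Mod K)} {X f : Mod K} (hX : X ∈ Dcal K S)
    (hf : f ∈ S) : Subsingleton (f ⟶ X) :=
  ⟨fun g g' => (hX.2 f hf g).trans (hX.2 f hf g').symm⟩

section Monoidal

variable [MonoidalCategory K] [MonoidalCategory (Mod K)] [(yK K).Monoidal]

def yonedaTensorCokernelIso (k : K) {a b : K} (h : a ⟶ b)
    [PreservesColimits (tensorLeft ((yK K).obj k))] :
    (yK K).obj k ⊗ cokernel ((yK K).map h) ≅ cokernel ((yK K).map (k ◁ h)) :=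
  PreservesCokernel.iso (tensorLeft ((yK K).obj k)) ((yK K).map h) ≪≫
    cokernel.mapIso _ _ (Functor.Monoidal.μIso (yK K) k a) (Functor.Monoidal.μIso (yK K) k b)
      (by simp [Functor.LaxMonoidal.μ_natural_right])

def cokernelTensorYonedaIso (k : K) {a b : K} (h : a ⟶ b)
    [PreservesColimits (tensorRight ((yK K).obj k))] :
    cokernel ((yK K).map h) ⊗ (yK K).obj k ≅ cokernel ((yK K).map (h ▷ k)) :=
  PreservesCokernel.iso (tensorRight ((yK K).obj k)) ((yK K).map h) ≪≫
    cokernel.mapIso _ _ (Functor.Monoidal.μIso (yK K) a k) (Functor.Monoidal.μIso (yK K) b k)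
      (by simp [Functor.LaxMonoidal.μ_natural_left])

def cokernelYonedaWhiskerIso [BraidedCategory K] (k : K) {a b : K} (h : a ⟶ b) :
    cokernel ((yK K).map (k ◁ h)) ≅ cokernel ((yK K).map (h ▷ k)) :=
  cokernel.mapIso _ _ ((yK K).mapIso (β_ k a)) ((yK K).mapIso (β_ k b))
    (by simp only [Functor.mapIso_hom, ← Functor.map_comp,
      BraidedCategory.braiding_naturality_right])

lemma IsFlat.yoneda_tensor (k : K) [PreservesColimits (tensorLeft ((yK K).obj k))] {X : Mod K}
    (hX : IsFlat K X) : IsFlat K ((yK K).obj k ⊗ X) := by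
  obtain ⟨J, _, _, G, ⟨e⟩⟩ := hX
  refine ⟨J, inferInstance, inferInstance, G ⋙ tensorLeft k, ⟨?_⟩⟩
  exact HasColimit.isoOfNatIso
      (Functor.isoWhiskerLeft G (Functor.Monoidal.commTensorLeft (yK K) k).symm) ≪≫
    (preservesColimitIso (tensorLeft ((yK K).obj k)) (G ⋙ yK K)).symm ≪≫
    (tensorLeft ((yK K).obj k)).mapIso e

lemma IsSerreTensorIdeal.yoneda_tensor_mem [BraidedCategory K] {S : Set (Mod K)}
    (hS : IsSerreTensorIdeal K S) (k : K) [HasRightDual k]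
    [PreservesColimits (tensorLeft ((yK K).obj k))] {f : Mod K} (hf : f ∈ S) :
    (yK K).obj k ⊗ f ∈ S := by
  let := ExactPairing.map (yK K) k kᘁ
  have := (tensorRightAdjunction ((yK K).obj k) ((yK K).obj kᘁ)).leftAdjoint_preservesColimits
  obtain ⟨a, b, h, ⟨e⟩⟩ := (hS.1.fp f hf).exists_cokernel_yoneda_map
  have hcok : cokernel ((yK K).map h) ∈ S := hS.1.mem_of_iso e ⟨a, b, _, ⟨Iso.refl _⟩⟩ hf
  have e₁ : (yK K).obj k ⊗ f ≅ cokernel ((yK K).map (k ◁ h)) :=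
    (tensorLeft _).mapIso e ≪≫ yonedaTensorCokernelIso k h
  have e₂ : cokernel ((yK K).map h) ⊗ (yK K).obj k ≅ (yK K).obj k ⊗ f :=
    cokernelTensorYonedaIso k h ≪≫ (cokernelYonedaWhiskerIso k h).symm ≪≫ e₁.symm
  exact hS.1.mem_of_iso e₂ ⟨_, _, _, ⟨e₁⟩⟩ (hS.2 _ hcok _ (isFP_yoneda_obj k))

end Monoidal

end

variable (K : Type u) [SmallCategory K] [Preadditive K]
  [MonoidalCategory K] [SymmetricCategory K] [RigidCategory K]
  [HasZeroObject K] [HasShift K ℤ] [∀ n : ℤ, (shiftFunctor K n).Additive] [Pretriangulated K]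
  [MonoidalCategory (Mod K)] [MonoidalPreadditive (Mod K)]
  [(yK K).Monoidal] [∀ X : Mod K, PreservesColimits (tensorLeft X)]

/-- For a rigid essentially small tt-category `K`, a Serre ⊗-ideal `S ⊆ mod K`,
`X ∈ D(S)` and `k ∈ K`, the object `y k ⊗ X` again lies in `D(S)`. -/
theorem yoneda_tensor_mem_Dcal (S : Set (Mod K)) (hS : IsSerreTensorIdeal K S) :
    ∀ X ∈ Dcal K S, ∀ k : K, (yK K).obj k ⊗ X ∈ Dcal K S := by
  intro X hX k
  let := ExactPairing.map (yK K) k kᘁ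
  refine ⟨hX.1.yoneda_tensor k, fun f hf g => ?_⟩
  have := subsingleton_hom_of_mem_Dcal hX (hS.yoneda_tensor_mem kᘁ hf)
  have := (tensorLeftHomEquiv f ((yK K).obj k) ((yK K).obj kᘁ) X).symm.subsingleton
  exact Subsingleton.elim g 0

end TTG
end
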